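/- arXiv:2209.13068 — 2 statements merged into one kernel-verified Lean document; each statement's English description precedes it below -/
import Mathlib

section
/- There exists a constant c > 0, independent of g₀, g₁, such that for all g₀ > g₁ > 0, ∫_0^{π/2} ε₊(k)^{−3} dk ≤ (π/2) c / (√(g₀ g₁) (g₀ − g₁)²), where ε₊(k) = √((g₀−g₁)² + 4 g₀ g₁ cos²(k)). -/
open Real MeasureTheory

lemma deriv_aux (A c : ℝ) (hA : 0 < A) (hc : 0 < c) (k : ℝ) :
    HasDerivAt (fun k => (k - π/2) / (A^2 * Real.sqrt (A^2 + c*(π/2-k)^2)))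
      ((Real.sqrt (A^2 + c*(π/2-k)^2)) ^ (-(3:ℤ))) k := by
  have hQ : 0 < A^2 + c*(π/2-k)^2 := by positivity
  have hsq : Real.sqrt (A^2 + c*(π/2-k)^2) > 0 := Real.sqrt_pos.2 hQ
  have hQd : HasDerivAt (fun k => A^2 + c*(π/2-k)^2) (c * (2 * (π/2-k)) * (-1)) k := by
    have h0 : HasDerivAt (fun k : ℝ => π/2 - k) (-1) k := by
      simpa using (hasDerivAt_id k).const_sub (π/2)
    have := ((h0.pow 2).const_mul c).const_add (A^2)
    refine this.congr_deriv ?_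
    push_cast
    ring
  have hS : HasDerivAt (fun k => Real.sqrt (A^2 + c*(π/2-k)^2))
      (c * (2 * (π/2-k)) * (-1) / (2 * Real.sqrt (A^2 + c*(π/2-k)^2))) k :=
    hQd.sqrt hQ.ne'
  have hden : HasDerivAt (fun k => A^2 * Real.sqrt (A^2 + c*(π/2-k)^2))
      (A^2 * (c * (2 * (π/2-k)) * (-1) / (2 * Real.sqrt (A^2 + c*(π/2-k)^2)))) k :=
    hS.const_mul (A^2)
  have hnum : HasDerivAt (fun k : ℝ => k - π/2) 1 k := (hasDerivAt_id k).sub_const _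
  have hd := hnum.div hden (by positivity)
  refine hd.congr_deriv ?_
  set s := Real.sqrt (A^2 + c*(π/2-k)^2) with hs
  have hs2 : s ^ 2 = A^2 + c*(π/2-k)^2 := Real.sq_sqrt hQ.le
  rw [zpow_neg, zpow_ofNat]
  have hs0 : s ≠ 0 := hsq.ne'
  have hA0 : A ≠ 0 := hA.ne'
  field_simp
  linear_combination 4 * hs2

theorem ssh_integral_estimate :
    ∃ c : ℝ, 0 < c ∧ ∀ g₀ g₁ : ℝ, g₁ < g₀ → 0 < g₁ →
      ∫ k in (0:ℝ)..(π / 2),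
          (Real.sqrt ((g₀ - g₁) ^ 2 + 4 * g₀ * g₁ * Real.cos k ^ 2)) ^ (-(3:ℤ))
        ≤ (π / 2) * c / (Real.sqrt (g₀ * g₁) * (g₀ - g₁) ^ 2) := by
  refine ⟨1/2, by norm_num, fun g₀ g₁ hlt h1 => ?_⟩
  have h0 : 0 < g₀ := h1.trans hlt
  set A := g₀ - g₁ with hA
  have hApos : 0 < A := sub_pos.2 hlt
  set c := 16 * g₀ * g₁ / π^2 with hc
  have hπ : 0 < π := pi_pos
  have hcpos : 0 < c := by positivity
  set h : ℝ → ℝ := fun k => (Real.sqrt (A^2 + c*(π/2-k)^2)) ^ (-(3:ℤ)) with hh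
  have key : ∀ k ∈ Set.Icc (0:ℝ) (π/2),
      (Real.sqrt (A ^ 2 + 4 * g₀ * g₁ * Real.cos k ^ 2)) ^ (-(3:ℤ)) ≤ h k := by
    intro k hk
    obtain ⟨hk0, hk1⟩ := hk
    have hcos : 2 / π * (π/2 - k) ≤ Real.cos k := by
      rw [← Real.sin_pi_div_two_sub]
      exact Real.mul_le_sin (by linarith) (by linarith)
    have hcosnn : 0 ≤ Real.cos k := Real.cos_nonneg_of_mem_Icc ⟨by linarith, hk1⟩
    have hunn : 0 ≤ 2 / π * (π/2 - k) := mul_nonneg (by positivity) (by linarith)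
    have h2 : (2 / π * (π/2 - k))^2 ≤ Real.cos k ^ 2 :=
      sq_le_sq' (by linarith) hcos
    have hqle : A^2 + c*(π/2-k)^2 ≤ A^2 + 4*g₀*g₁*Real.cos k ^ 2 := by
      have heq : c*(π/2-k)^2 = 4*g₀*g₁*(2 / π * (π/2 - k))^2 := by
        rw [hc]; field_simp; ring
      have := mul_le_mul_of_nonneg_left h2 (show (0:ℝ) ≤ 4*g₀*g₁ by positivity)
      linarith [heq ▸ this]
    have hQ : 0 < A^2 + c*(π/2-k)^2 := by positivity
    have h1' : 0 < Real.sqrt (A^2 + c*(π/2-k)^2) := Real.sqrt_pos.2 hQ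
    simp only [hh]
    rw [zpow_neg, zpow_neg, zpow_ofNat, zpow_ofNat]
    apply inv_anti₀
    · positivity
    · exact pow_le_pow_left₀ h1'.le (Real.sqrt_le_sqrt hqle) 3
  have hconth : ContinuousOn h (Set.Icc 0 (π/2)) := by
    apply ContinuousOn.zpow₀
    · exact (Real.continuous_sqrt.comp (by continuity)).continuousOn
    · intro k _
      left
      have : 0 < A^2 + c*(π/2-k)^2 := by positivity
      positivity
  have hcontf : ContinuousOn
      (fun k => (Real.sqrt (A ^ 2 + 4 * g₀ * g₁ * Real.cos k ^ 2)) ^ (-(3:ℤ)))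
      (Set.Icc 0 (π/2)) := by
    apply ContinuousOn.zpow₀
    · exact (Real.continuous_sqrt.comp (by continuity)).continuousOn
    · intro k _
      left
      have h2 : 0 < A ^ 2 + 4 * g₀ * g₁ * Real.cos k ^ 2 := by positivity
      positivity
  have hle2 : (0:ℝ) ≤ π/2 := by positivity
  have step1 : ∫ k in (0:ℝ)..(π / 2),
      (Real.sqrt (A ^ 2 + 4 * g₀ * g₁ * Real.cos k ^ 2)) ^ (-(3:ℤ))
      ≤ ∫ k in (0:ℝ)..(π / 2), h k := by
    apply intervalIntegral.integral_mono_on hle2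
    · exact ContinuousOn.intervalIntegrable (by rw [Set.uIcc_of_le hle2]; exact hcontf)
    · exact ContinuousOn.intervalIntegrable (by rw [Set.uIcc_of_le hle2]; exact hconth)
    · exact key
  have step2 : ∫ k in (0:ℝ)..(π / 2), h k
      = (π/2) / (A^2 * Real.sqrt (A^2 + c*(π/2)^2)) := by
    have := intervalIntegral.integral_eq_sub_of_hasDerivAt
      (f := fun k => (k - π/2) / (A^2 * Real.sqrt (A^2 + c*(π/2-k)^2)))
      (f' := h)
      (fun k _ => deriv_aux A c hApos hcpos k)
      (ContinuousOn.intervalIntegrable (by rw [Set.uIcc_of_le hle2]; exact hconth))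
    rw [this]
    simp
    ring
  have h4 : Real.sqrt (4*g₀*g₁) = 2*Real.sqrt (g₀*g₁) := by
    rw [show (4:ℝ)*g₀*g₁ = 2^2*(g₀*g₁) by ring, Real.sqrt_mul (by positivity),
      Real.sqrt_sq (by norm_num)]
  have hsq : 2 * Real.sqrt (g₀*g₁) ≤ Real.sqrt (A^2 + c*(π/2)^2) := by
    rw [← h4]
    apply Real.sqrt_le_sqrt
    have hcval : c * (π/2)^2 = 4 * g₀ * g₁ := by rw [hc]; field_simp; ring
    nlinarith [sq_nonneg A]
  have hspos : 0 < Real.sqrt (g₀ * g₁) := Real.sqrt_pos.2 (by positivity)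
  have step3 : (π/2) / (A^2 * Real.sqrt (A^2 + c*(π/2)^2))
      ≤ (π / 2) * (1/2) / (Real.sqrt (g₀ * g₁) * A ^ 2) := by
    rw [div_le_div_iff₀ (by positivity) (by positivity)]
    have hm : A^2 * (2 * Real.sqrt (g₀*g₁)) ≤ A^2 * Real.sqrt (A^2 + c*(π/2)^2) :=
      mul_le_mul_of_nonneg_left hsq (sq_nonneg A)
    nlinarith [hm, hπ]
  calc _ ≤ ∫ k in (0:ℝ)..(π / 2), h k := step1
    _ = _ := step2
    _ ≤ _ := step3
end

section
/- Define R(x; ω) = [(x − ω² + τ^{−2})² + 4ω²τ^{−2}]^{−1/2} for x in the interval I = [4(g₀−g₁)², 4(g₀+g₁)²] and ω ∈ ℝ, with τ > 0 and g₀ > g₁ > 0. Then sup over ω ∈ ℝ and x ∈ I of g₀g₁ R(x;ω) equals (1/4) · g₀g₁τ/(g₀−g₁) · Ř(2(g₀−g₁)τ), where Ř(ξ) = 2ξ/(ξ²+1) if 0 ≤ ξ < 1 and Ř(ξ) = 1 if ξ ≥ 1. -/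
/-! With `a = τ⁻²`, the quartic `(x - ω² + a)² + 4ω²a` equals `(x - ω² - a)² + 4ax`. For `x ≥ a`
its minimum over `ω` is `4ax`, attained at `ω² = x - a`; for `x ≤ a` it is `(x + a)²`, attained at
`ω = 0`. Both grow with `x`, so over `x ∈ I` the minimum sits at the left endpoint
`x = 4(g₀ - g₁)² = ξ²a`, where `ξ = 2(g₀ - g₁)τ`, and the two regimes are `ξ < 1` and `ξ ≥ 1`. -/

open Real

noncomputable def Rcheck (ξ : ℝ) : ℝ := if ξ < 1 then 2 * ξ / (ξ ^ 2 + 1) else 1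

open Set

def resonanceDenom (a x ω : ℝ) : ℝ := (x - ω ^ 2 + a) ^ 2 + 4 * ω ^ 2 * a

section resonanceDenom

variable {a x xm xM : ℝ}

lemma resonanceDenom_eq (a x ω : ℝ) :
    resonanceDenom a x ω = (x - ω ^ 2 - a) ^ 2 + 4 * a * x := by
  unfold resonanceDenom; ring

lemma resonanceDenom_zero (a x : ℝ) : resonanceDenom a x 0 = (x + a) ^ 2 := by
  unfold resonanceDenom; ring

lemma resonanceDenom_sqrt_sub (h : a ≤ x) : resonanceDenom a x √(x - a) = 4 * a * x := by
  rw [resonanceDenom_eq, sq_sqrt (sub_nonneg.mpr h)]; ring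

lemma four_mul_le_resonanceDenom (ha : 0 ≤ a) (hx : xm ≤ x) (ω : ℝ) :
    4 * a * xm ≤ resonanceDenom a x ω := by
  rw [resonanceDenom_eq]; nlinarith [sq_nonneg (x - ω ^ 2 - a)]

lemma sq_add_le_resonanceDenom (ha : 0 ≤ a) (hxm : 0 ≤ xm) (hx : xm ≤ x) (h : xm ≤ a) (ω : ℝ) :
    (xm + a) ^ 2 ≤ resonanceDenom a x ω := by
  rcases le_total x a with hxa | hax
  · have : (a - x) ^ 2 ≤ (x - ω ^ 2 - a) ^ 2 := by nlinarith [sq_nonneg ω]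
    rw [resonanceDenom_eq]; nlinarith
  · calc (xm + a) ^ 2 ≤ 4 * a * a := by nlinarith
      _ ≤ resonanceDenom a x ω := four_mul_le_resonanceDenom ha hax ω

lemma isLeast_resonanceDenom_of_le (ha : 0 ≤ a) (hxm : 0 ≤ xm) (hxM : xm ≤ xM) (h : xm ≤ a) :
    IsLeast (image2 (resonanceDenom a) (Icc xm xM) univ) ((xm + a) ^ 2) := by
  refine ⟨⟨xm, ⟨le_rfl, hxM⟩, 0, mem_univ _, resonanceDenom_zero a xm⟩, ?_⟩
  rintro _ ⟨x, hx, ω, -, rfl⟩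
  exact sq_add_le_resonanceDenom ha hxm hx.1 h ω

lemma isLeast_resonanceDenom_of_ge (ha : 0 ≤ a) (hxM : xm ≤ xM) (h : a ≤ xm) :
    IsLeast (image2 (resonanceDenom a) (Icc xm xM) univ) (4 * a * xm) := by
  refine ⟨⟨xm, ⟨le_rfl, hxM⟩, √(xm - a), mem_univ _, resonanceDenom_sqrt_sub h⟩, ?_⟩
  rintro _ ⟨x, hx, ω, -, rfl⟩
  exact four_mul_le_resonanceDenom ha hx.1 ω

end resonanceDenom

lemma Rcheck_pos {ξ : ℝ} (hξ : 0 < ξ) : 0 < Rcheck ξ := by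
  unfold Rcheck; split_ifs <;> positivity

-- Both minima `(ξ²a + a)²` (for `ξ < 1`) and `4a · ξ²a` (for `ξ ≥ 1`) are `(2ξa / Ř(ξ))²`.
lemma isLeast_resonanceDenom {a ξ xM : ℝ} (ha : 0 < a) (hξ : 0 < ξ) (hxM : ξ ^ 2 * a ≤ xM) :
    IsLeast (image2 (resonanceDenom a) (Icc (ξ ^ 2 * a) xM) univ)
      ((2 * ξ * a / Rcheck ξ) ^ 2) := by
  unfold Rcheck
  split_ifs with h
  · convert isLeast_resonanceDenom_of_le ha.le (by positivity) hxM
      (mul_le_of_le_one_left ha.le (pow_le_one₀ hξ.le h.le)) using 1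
    field_simp
  · convert isLeast_resonanceDenom_of_ge ha.le hxM
      (le_mul_of_one_le_left ha.le (one_le_pow₀ (not_lt.mp h))) using 1
    ring

lemma rpow_sq_neg_half {b : ℝ} (hb : 0 < b) : (b ^ 2) ^ (-(1/2) : ℝ) = b⁻¹ := by
  rw [rpow_neg (by positivity), ← sqrt_eq_rpow, sqrt_sq hb.le]

lemma IsLeast.isGreatest_image_mul_rpow_neg_half {s : Set ℝ} {m c : ℝ} (hm : IsLeast s m)
    (hm₀ : 0 < m) (hc : 0 ≤ c) :
    IsGreatest ((fun q ↦ c * q ^ (-(1/2) : ℝ)) '' s) (c * m ^ (-(1/2) : ℝ)) := by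
  refine AntitoneOn.map_isLeast (fun p hp q _ hpq ↦ ?_) hm
  exact mul_le_mul_of_nonneg_left
    (rpow_le_rpow_of_nonpos (hm₀.trans_le (hm.2 hp)) hpq (by norm_num)) hc

theorem resonance_sup (g₀ g₁ τ : ℝ) (hg : g₁ < g₀) (hg₁ : 0 < g₁) (hτ : 0 < τ) :
    sSup {y : ℝ | ∃ ω : ℝ, ∃ x ∈ Set.Icc (4 * (g₀ - g₁) ^ 2) (4 * (g₀ + g₁) ^ 2),
        y = g₀ * g₁ * ((x - ω ^ 2 + τ⁻¹ ^ 2) ^ 2 + 4 * ω ^ 2 * τ⁻¹ ^ 2) ^ (-(1/2) : ℝ)}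
      = (1/4) * (g₀ * g₁ * τ / (g₀ - g₁)) * Rcheck (2 * (g₀ - g₁) * τ) := by
  set ξ := 2 * (g₀ - g₁) * τ
  have hg₀ : 0 < g₀ := hg₁.trans hg
  have hξ : 0 < ξ := by have := sub_pos.mpr hg; positivity
  have hxm : 4 * (g₀ - g₁) ^ 2 = ξ ^ 2 * τ⁻¹ ^ 2 := by field_simp; ring
  have hset : {y : ℝ | ∃ ω : ℝ, ∃ x ∈ Set.Icc (4 * (g₀ - g₁) ^ 2) (4 * (g₀ + g₁) ^ 2),
        y = g₀ * g₁ * ((x - ω ^ 2 + τ⁻¹ ^ 2) ^ 2 + 4 * ω ^ 2 * τ⁻¹ ^ 2) ^ (-(1/2) : ℝ)} =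
      (fun q ↦ g₀ * g₁ * q ^ (-(1/2) : ℝ)) ''
        image2 (resonanceDenom (τ⁻¹ ^ 2)) (Icc (ξ ^ 2 * τ⁻¹ ^ 2) (4 * (g₀ + g₁) ^ 2)) univ := by
    rw [← hxm]
    ext y
    constructor
    · rintro ⟨ω, x, hx, rfl⟩
      exact ⟨_, mem_image2_of_mem hx (mem_univ ω), rfl⟩
    · rintro ⟨_, ⟨x, hx, ω, -, rfl⟩, rfl⟩
      exact ⟨ω, x, hx, rfl⟩
  have hmin := isLeast_resonanceDenom (a := τ⁻¹ ^ 2) (xM := 4 * (g₀ + g₁) ^ 2) (by positivity) hξ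
    (by rw [← hxm]; nlinarith)
  have hR := Rcheck_pos hξ
  rw [hset, (hmin.isGreatest_image_mul_rpow_neg_half (by positivity) (by positivity)).csSup_eq,
    rpow_sq_neg_half (by positivity)]
  simp only [ξ]
  field_simp
  ring
end
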